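/- Every symmetric bilinear form B : C∞₂π(ℝ,ℂ) × C∞₂π(ℝ,ℂ) → ℂ that is invariant, i.e. satisfies B([f,g],h) + B(g,[f,h]) = 0 for all f, g, h ∈ C∞₂π(ℝ,ℂ), is identically zero. In other words, the Lie algebra Vect(S¹) admits no non-zero invariant symmetric bilinear form ('no Killing form'). -/
import Mathlib


open Real intervalIntegral
open scoped ContDiff

noncomputable section

/-- The space `C∞₂π(ℝ,ℂ)` of smooth `2π`-periodic functions `ℝ → ℂ`
(identified with `Vect(S¹)`, `f` representing the vector field `f·d/dx`),
as a `ℂ`-submodule of `ℝ → ℂ`. -/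
def SmoothPeriodic : Submodule ℂ (ℝ → ℂ) where
  carrier := {f | ContDiff ℝ ∞ f ∧ Function.Periodic f (2 * π)}
  add_mem' hf hg := ⟨hf.1.add hg.1, hf.2.add hg.2⟩
  zero_mem' := ⟨contDiff_const, fun _ => rfl⟩
  smul_mem' c f hf := ⟨hf.1.const_smul c, hf.2.smul c⟩

lemma SmoothPeriodic.periodic_deriv {f : ℝ → ℂ} (hf : Function.Periodic f (2 * π)) :
    Function.Periodic (deriv f) (2 * π) := fun x => by
  rw [← deriv_comp_add_const]
  congr 1
  funext t
  exact hf t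

/-- The Lie bracket `[f,g] = f·g′ − f′·g` of vector fields on `S¹`. -/
def vectBracket (f g : SmoothPeriodic) : SmoothPeriodic :=
  ⟨fun x => (f : ℝ → ℂ) x * deriv (g : ℝ → ℂ) x - deriv (f : ℝ → ℂ) x * (g : ℝ → ℂ) x, by
    obtain ⟨hfs, hfp⟩ := f.2
    obtain ⟨hgs, hgp⟩ := g.2
    exact ⟨(hfs.mul (contDiff_infty_iff_deriv.mp hgs).2).sub
        ((contDiff_infty_iff_deriv.mp hfs).2.mul hgs),
      (hfp.mul (SmoothPeriodic.periodic_deriv hgp)).sub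
        ((SmoothPeriodic.periodic_deriv hfp).mul hgp)⟩⟩

/-! ### Auxiliary definitions -/

/-- The exponential `eₙ(x) = exp(n i x)`, as a bare function. -/
def Ee (n : ℤ) : ℝ → ℂ := fun x => Complex.exp ((n : ℂ) * Complex.I * x)

lemma Ee_smooth (n : ℤ) : ContDiff ℝ ∞ (Ee n) :=
  ((Complex.contDiff_exp (𝕜 := ℂ)).restrict_scalars ℝ).comp
    (contDiff_const.mul Complex.ofRealCLM.contDiff :
      ContDiff ℝ ∞ (fun x : ℝ => (n : ℂ) * Complex.I * (x : ℂ)))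

lemma Ee_periodic (n : ℤ) : Function.Periodic (Ee n) (2 * π) := fun x => by
  unfold Ee
  rw [show ((↑(x + 2 * π) : ℂ)) = (x : ℂ) + 2 * (π : ℝ) by push_cast; ring]
  rw [mul_add, Complex.exp_add,
    show (n : ℂ) * Complex.I * (2 * (π : ℝ) : ℂ) = n * (2 * (π : ℝ) * Complex.I) by ring,
    Complex.exp_int_mul_two_pi_mul_I, mul_one]

lemma Ee_hasDerivAt (n : ℤ) (x : ℝ) :
    HasDerivAt (Ee n) ((n : ℂ) * Complex.I * Ee n x) x := by
  have h : HasDerivAt (fun w : ℂ => Complex.exp ((n : ℂ) * Complex.I * w))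
      (Complex.exp ((n : ℂ) * Complex.I * x) * ((n : ℂ) * Complex.I)) (x : ℂ) := by
    simpa using (((hasDerivAt_id ((x : ℂ))).const_mul ((n : ℂ) * Complex.I))).cexp
  have h2 := h.comp_ofReal
  rw [show (n : ℂ) * Complex.I * Ee n x
      = Complex.exp ((n : ℂ) * Complex.I * x) * ((n : ℂ) * Complex.I) by unfold Ee; ring]
  exact h2

lemma Ee_mul (m n : ℤ) (x : ℝ) : Ee m x * Ee n x = Ee (m + n) x := by
  unfold Ee
  rw [← Complex.exp_add]
  push_cast
  ring_nf

/-- `eₙ` as an element of `SmoothPeriodic`. -/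
def Efun (n : ℤ) : SmoothPeriodic := ⟨Ee n, Ee_smooth n, Ee_periodic n⟩

/-- Multiplication by `eₙ` on `SmoothPeriodic`. -/
def mulE (n : ℤ) (u : SmoothPeriodic) : SmoothPeriodic :=
  ⟨fun x => Ee n x * (u : ℝ → ℂ) x,
    (Ee_smooth n).mul u.2.1, (Ee_periodic n).mul u.2.2⟩

/-- The derivative operator on `SmoothPeriodic`. -/
def Dp (u : SmoothPeriodic) : SmoothPeriodic :=
  ⟨deriv (u : ℝ → ℂ), (contDiff_infty_iff_deriv.mp u.2.1).2,
    SmoothPeriodic.periodic_deriv u.2.2⟩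

lemma mulE_zero (u : SmoothPeriodic) : mulE 0 u = u := by
  apply Subtype.ext
  funext x
  simp [mulE, Ee]

lemma bracket_E (k a a' : ℤ) (ha : a' = k + a) (c : ℂ)
    (hc : c = ((a : ℂ) - (k : ℂ)) * Complex.I) (u : SmoothPeriodic) :
    vectBracket (Efun k) (mulE a u) = mulE a' (Dp u) + c • mulE a' u := by
  apply Subtype.ext
  funext x
  have hu : HasDerivAt (u : ℝ → ℂ) (deriv (u : ℝ → ℂ) x) x :=
    (((contDiff_infty_iff_deriv.mp u.2.1).1) x).hasDerivAt
  have hd1 : deriv (Efun k : ℝ → ℂ) x = (k : ℂ) * Complex.I * Ee k x :=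
    (Ee_hasDerivAt k x).deriv
  have hd2 : deriv (mulE a u : ℝ → ℂ) x
      = (a : ℂ) * Complex.I * Ee a x * (u : ℝ → ℂ) x + Ee a x * deriv (u : ℝ → ℂ) x :=
    HasDerivAt.deriv ((Ee_hasDerivAt a x).mul hu)
  show Ee k x * deriv (mulE a u : ℝ → ℂ) x - deriv (Efun k : ℝ → ℂ) x
        * (Ee a x * (u : ℝ → ℂ) x)
      = Ee a' x * deriv (u : ℝ → ℂ) x + c * (Ee a' x * (u : ℝ → ℂ) x)
  rw [hd1, hd2, ha, hc, ← Ee_mul k a]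
  ring

theorem vectS1_no_invariant_symmetric_bilinear_form
    (B : SmoothPeriodic →ₗ[ℂ] SmoothPeriodic →ₗ[ℂ] ℂ)
    (hsymm : ∀ f g : SmoothPeriodic, B f g = B g f)
    (hinv : ∀ f g h : SmoothPeriodic,
      B (vectBracket f g) h + B g (vectBracket f h) = 0) :
    B = 0 := by
  have key : ∀ (k a b a' b' : ℤ), a' = k + a → b' = k + b →
      ∀ (ca cb : ℂ), ca = ((a : ℂ) - (k : ℂ)) * Complex.I →
        cb = ((b : ℂ) - (k : ℂ)) * Complex.I →
      ∀ u v : SmoothPeriodic,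
      B (mulE a' (Dp u)) (mulE b v) + ca * B (mulE a' u) (mulE b v)
        + B (mulE a u) (mulE b' (Dp v)) + cb * B (mulE a u) (mulE b' v) = 0 := by
    intro k a b a' b' ha hb ca cb hca hcb u v
    have h := hinv (Efun k) (mulE a u) (mulE b v)
    rw [bracket_E k a a' ha ca hca u, bracket_E k b b' hb cb hcb v] at h
    simp only [map_add, map_smul, LinearMap.add_apply, LinearMap.smul_apply,
      smul_eq_mul] at h
    linear_combination h
  ext f g
  simp only [LinearMap.zero_apply]
  have h0 : B f g = B (mulE 0 f) (mulE 0 g) := by rw [mulE_zero, mulE_zero]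
  rw [h0]
  have h1 := key (-2) 0 2 (-2) 0 (by norm_num) (by norm_num)
    (2 * Complex.I) (4 * Complex.I) (by norm_num) (by norm_num) f (Dp g)
  have h2 := key (-2) 0 2 (-2) 0 (by norm_num) (by norm_num)
    (2 * Complex.I) (4 * Complex.I) (by norm_num) (by norm_num) f (Dp (Dp g))
  have h3 := key (-1) (-1) 2 (-2) 1 (by norm_num) (by norm_num)
    0 (3 * Complex.I) (by norm_num) (by norm_num) f g
  have h4 := key (-1) (-1) 2 (-2) 1 (by norm_num) (by norm_num)
    0 (3 * Complex.I) (by norm_num) (by norm_num) f (Dp g)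
  have h5 := key (-1) (-1) 2 (-2) 1 (by norm_num) (by norm_num)
    0 (3 * Complex.I) (by norm_num) (by norm_num) f (Dp (Dp g))
  have h6 := key (-1) 0 1 (-1) 0 (by norm_num) (by norm_num)
    Complex.I (2 * Complex.I) (by norm_num) (by norm_num) f g
  have h7 := key (-1) 0 1 (-1) 0 (by norm_num) (by norm_num)
    Complex.I (2 * Complex.I) (by norm_num) (by norm_num) f (Dp g)
  have h8 := key (-1) 0 1 (-1) 0 (by norm_num) (by norm_num)
    Complex.I (2 * Complex.I) (by norm_num) (by norm_num) f (Dp (Dp g))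
  have h9 := key 0 (-2) 2 (-2) 2 (by norm_num) (by norm_num)
    (-2 * Complex.I) (2 * Complex.I) (by norm_num) (by norm_num) f g
  have h10 := key 0 (-2) 2 (-2) 2 (by norm_num) (by norm_num)
    (-2 * Complex.I) (2 * Complex.I) (by norm_num) (by norm_num) f (Dp g)
  have h11 := key 0 (-1) 1 (-1) 1 (by norm_num) (by norm_num)
    (-Complex.I) Complex.I (by norm_num) (by norm_num) f g
  have h12 := key 0 (-1) 1 (-1) 1 (by norm_num) (by norm_num)
    (-Complex.I) Complex.I (by norm_num) (by norm_num) f (Dp g)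
  have h13 := key 0 (-1) 1 (-1) 1 (by norm_num) (by norm_num)
    (-Complex.I) Complex.I (by norm_num) (by norm_num) f (Dp (Dp g))
  have hI : Complex.I * Complex.I = -1 := Complex.I_mul_I
  linear_combination (1/12 : ℂ) * h1 + (Complex.I/12) * h2 + (Complex.I/6) * h3
    + (-1/4 : ℂ) * h4 + (-Complex.I/12) * h5 + (-Complex.I/2) * h6
    + (1/12 : ℂ) * h7 + (-Complex.I/12) * h8 + (-Complex.I/6) * h9
    + (1/6 : ℂ) * h10 + (Complex.I/2) * h11 + (-1/12 : ℂ) * h12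
    + (Complex.I/12) * h13
    + (B (mulE 0 f) (mulE 0 g) + (1/3 : ℂ) * B (mulE (-1) f) (mulE 1 (Dp (Dp g)))
      - (1/6 : ℂ) * B (mulE 0 f) (mulE 0 (Dp (Dp g)))
      - (1/6 : ℂ) * B (mulE (-2) f) (mulE 2 (Dp (Dp g)))) * hI
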